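/- Let f, g : ℝ² → ℝ be C² functions and let x* be a local minimum of f subject to the constraint g = 0, with ∇f(x*) ≠ 0 and ∇g(x*) ≠ 0, and let λ* ∈ ℝ satisfy ∇f(x*) = λ* ∇g(x*) (so λ* ≠ 0). Define the unit tangent vectors u_f = (∂₂f(x*), −∂₁f(x*))/‖∇f(x*)‖ and u_g = (∂₂g(x*), −∂₁g(x*))/‖∇g(x*)‖, and the algebraic curvatures κ_f(x*) = −u_fᵀ ∇²f(x*) u_f / ‖∇f(x*)‖ and κ_g(x*) = −u_gᵀ ∇²g(x*) u_g / ‖∇g(x*)‖. Then κ_f(x*) ≤ (λ*/|λ*|) · κ_g(x*). -/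

import Mathlib

open Matrix Set Metric

noncomputable def grad {n : ℕ} (f : (Fin n → ℝ) → ℝ) (x : Fin n → ℝ) : Fin n → ℝ :=
  fun i => fderiv ℝ f x (Pi.single i 1)

noncomputable def hess {n : ℕ} (f : (Fin n → ℝ) → ℝ) (x : Fin n → ℝ) :
    Matrix (Fin n) (Fin n) ℝ :=
  Matrix.of fun i j => fderiv ℝ (fun y => fderiv ℝ f y (Pi.single j 1)) x (Pi.single i 1)

noncomputable def jac {n m : ℕ} (g : (Fin n → ℝ) → Fin m → ℝ) (x : Fin n → ℝ) :
    Matrix (Fin m) (Fin n) ℝ :=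
  Matrix.of fun i j => fderiv ℝ (fun y => g y i) x (Pi.single j 1)

noncomputable def euclNorm {n : ℕ} (v : Fin n → ℝ) : ℝ := Real.sqrt (v ⬝ᵥ v)

/-!
With the Lagrangian `L = f - λ g`, the point `x*` is critical for `L`, and along any curve in
`{g = 0}` through `x*` with velocity `v` the second-order Taylor expansion of `L` gives
`D²L(x*)(v, v) ≥ 0`. The implicit function theorem provides such a curve with velocity `u_g`,
which spans `ker Dg(x*)`. Since `u_f = (λ/|λ|) u_g` and `‖∇f(x*)‖ = |λ| ‖∇g(x*)‖`, multiplying the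
claim by `|λ| ‖∇g(x*)‖` turns it into `D²L(x*)(u_g, u_g) ≥ 0`.
-/

open Asymptotics Filter
open scoped Topology

section Calculus

variable {E F : Type*} [NormedAddCommGroup E] [NormedSpace ℝ E]
  [NormedAddCommGroup F] [NormedSpace ℝ F]

theorem ContDiffAt.differentiableAt_fderiv {L : E → F} {x : E} (hL : ContDiffAt ℝ 2 L x) :
    DifferentiableAt ℝ (fderiv ℝ L) x :=
  (hL.fderiv_right (m := 1) le_rfl).differentiableAt one_ne_zero

theorem ContDiffAt.isLittleO_taylor_two {L : E → F} {x : E} (hL : ContDiffAt ℝ 2 L x) :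
    (fun y => L y - L x - fderiv ℝ L x (y - x)
      - (2 : ℝ)⁻¹ • fderiv ℝ (fderiv ℝ L) x (y - x) (y - x)) =o[𝓝 x] fun y => ‖y - x‖ ^ 2 := by
  set B := fderiv ℝ (fderiv ℝ L) x
  obtain ⟨ε, hε, hball⟩ : ∃ ε > 0, ∀ y ∈ ball x ε, ContDiffAt ℝ 2 L y :=
    eventually_nhds_iff_ball.1 (hL.eventually (by simp))
  have hsymm : IsSymmSndFDerivAt ℝ L x := hL.isSymmSndFDerivAt (by simp)
  have hderiv : ∀ y ∈ ball x ε, HasFDerivWithinAt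
      (fun y => L y - L x - fderiv ℝ L x (y - x) - (2 : ℝ)⁻¹ • B (y - x) (y - x))
      (fderiv ℝ L y - fderiv ℝ L x - B (y - x)) (ball x ε) y := by
    intro y hy
    have hsub : HasFDerivAt (fun y : E => y - x) (ContinuousLinearMap.id ℝ E) y :=
      (hasFDerivAt_id y).sub_const x
    have hquad := ((B.hasFDerivAt.comp y hsub).clm_apply hsub).const_smul (2 : ℝ)⁻¹
    refine (((((hball y hy).differentiableAt (by simp)).hasFDerivAt.sub_const (L x)).sub
      ((fderiv ℝ L x).hasFDerivAt.comp y hsub)).sub hquad).hasFDerivWithinAt.congr_fderiv ?_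
    ext w
    -- `B` is symmetric, so `h ↦ B h h / 2` has derivative `B h`.
    simp only [_root_.sub_apply, _root_.smul_apply, _root_.add_apply,
      ContinuousLinearMap.coe_comp, Function.comp_apply, ContinuousLinearMap.id_apply,
      ContinuousLinearMap.flip_apply]
    rw [show B w (y - x) = B (y - x) w from hsymm.eq w (y - x)]
    module
  have hrem : (fun y => fderiv ℝ L y - fderiv ℝ L x - B (y - x)) =o[𝓝[ball x ε] x]
      fun y => ‖y - x‖ ^ 1 := by
    simpa using (hL.differentiableAt_fderiv.hasFDerivAt
      |>.isLittleO.norm_right.mono nhdsWithin_le_nhds)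
  simpa [nhdsWithin_eq_nhds.2 (ball_mem_nhds x hε)] using
    (convex_ball x ε).isLittleO_pow_succ (mem_ball_self hε) hderiv hrem

theorem IsLocalMin.fderiv_fderiv_apply_self_nonneg {L : E → ℝ} {γ : ℝ → E} {v : E}
    (hmin : IsLocalMin (L ∘ γ) 0) (hL : ContDiffAt ℝ 2 L (γ 0)) (hcrit : fderiv ℝ L (γ 0) = 0)
    (hγ : HasDerivAt γ v 0) : 0 ≤ fderiv ℝ (fderiv ℝ L) (γ 0) v v := by
  set a := γ 0
  set B := fderiv ℝ (fderiv ℝ L) a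
  have hrem : (fun t => L (γ t) - L a - 2⁻¹ * B (γ t - a) (γ t - a)) =o[𝓝 0] fun t => t ^ 2 := by
    have hγ_sq : (fun t => ‖γ t - a‖ ^ 2) =O[𝓝 0] fun t : ℝ => t ^ 2 := by
      simpa using hγ.isBigO_sub.norm_left.pow 2
    simpa only [Function.comp_def, hcrit, _root_.zero_apply, sub_zero, smul_eq_mul]
      using (hL.isLittleO_taylor_two.comp_tendsto hγ.continuousAt.tendsto).trans_isBigO hγ_sq
  have hslope : Tendsto (fun t => t⁻¹ • (γ t - a)) (𝓝[≠] 0) (𝓝 v) := by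
    refine (hasDerivAt_iff_tendsto_slope.1 hγ).congr fun t => ?_
    simp [slope_def_module, a]
  have hquot : Tendsto (fun t => (L (γ t) - L a) / t ^ 2) (𝓝[≠] 0) (𝓝 (2⁻¹ * B v v)) := by
    have hlim := (hrem.tendsto_div_nhds_zero.mono_left nhdsWithin_le_nhds).add
      (((B.continuous₂.tendsto (v, v)).comp (hslope.prodMk_nhds hslope)).const_mul 2⁻¹)
    rw [zero_add] at hlim
    refine hlim.congr' (eventually_nhdsWithin_of_forall fun t (ht : t ≠ 0) => ?_)
    simp only [Function.comp_apply, Function.uncurry_apply_pair, map_smul, _root_.smul_apply,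
      smul_eq_mul]
    field_simp
    ring
  have hnonneg : ∀ᶠ t in 𝓝[≠] 0, 0 ≤ (L (γ t) - L a) / t ^ 2 :=
    (hmin.filter_mono nhdsWithin_le_nhds).mono fun t ht =>
      div_nonneg (sub_nonneg.2 ht) (sq_nonneg t)
  linarith [ge_of_tendsto hquot hnonneg]

theorem HasStrictFDerivAt.exists_curve_tangent_of_mem_ker [CompleteSpace E] [FiniteDimensional ℝ F]
    {g : E → F} {g' : E →L[ℝ] F} {a v : E} (hg : HasStrictFDerivAt g g' a)
    (hsurj : g'.range = ⊤) (hv : g' v = 0) :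
    ∃ γ : ℝ → E, γ 0 = a ∧ HasDerivAt γ v 0 ∧ ∀ᶠ t in 𝓝 0, g (γ t) = g a := by
  let w : g'.ker := ⟨v, hv⟩
  refine ⟨fun t => hg.implicitFunction g g' hsurj (g a) (t • w), by simp, ?_, ?_⟩
  · simpa [w, Function.comp_def] using
      (hg.to_implicitFunction hsurj).hasFDerivAt.comp_hasDerivAt_of_eq 0
        ((hasDerivAt_id 0).smul_const w) (zero_smul ℝ w).symm
  · refine (tendsto_const_nhds.prodMk_nhds ?_).eventually (hg.map_implicitFunction_eq hsurj)
    exact (show Continuous fun t : ℝ => t • w by fun_prop).tendsto' 0 0 (zero_smul ℝ w)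

theorem IsLocalMinOn.mul_fderiv_fderiv_le_of_fderiv_eq_smul [CompleteSpace E] {f g : E → ℝ}
    {a v : E} {μ : ℝ} (hmin : IsLocalMinOn f {x | g x = g a} a) (hf : ContDiffAt ℝ 2 f a)
    (hg : ContDiffAt ℝ 2 g a) (hg' : fderiv ℝ g a ≠ 0) (hfg : fderiv ℝ f a = μ • fderiv ℝ g a)
    (hv : fderiv ℝ g a v = 0) :
    μ * fderiv ℝ (fderiv ℝ g) a v v ≤ fderiv ℝ (fderiv ℝ f) a v v := by
  set L := fun x => f x - μ * g x
  have hDL : fderiv ℝ L =ᶠ[𝓝 a] fun x => fderiv ℝ f x - μ • fderiv ℝ g x := by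
    filter_upwards [hf.eventually (by simp), hg.eventually (by simp)] with x hfx hgx
    have hgx' := hgx.differentiableAt two_ne_zero
    rw [fderiv_fun_sub (hfx.differentiableAt two_ne_zero) (hgx'.const_mul μ), fderiv_const_mul hgx']
  have hcrit : fderiv ℝ L a = 0 := by rw [hDL.eq_of_nhds, hfg, sub_self]
  have hD2L : fderiv ℝ (fderiv ℝ L) a = fderiv ℝ (fderiv ℝ f) a - μ • fderiv ℝ (fderiv ℝ g) a := by
    rw [hDL.fderiv_eq]
    exact (hf.differentiableAt_fderiv.hasFDerivAt.sub
      (hg.differentiableAt_fderiv.hasFDerivAt.const_smul μ)).fderiv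
  have hsurj : (fderiv ℝ g a).range = ⊤ :=
    LinearMap.range_eq_top.2 (LinearMap.surjective (by exact_mod_cast hg'))
  obtain ⟨γ, rfl, hγ, hγg⟩ :=
    (hg.hasStrictFDerivAt two_ne_zero).exists_curve_tangent_of_mem_ker hsurj hv
  have hLγ : IsLocalMin (L ∘ γ) 0 := by
    have hγ_fiber : Tendsto γ (𝓝 0) (𝓝[{x | g x = g (γ 0)}] γ 0) :=
      tendsto_nhdsWithin_iff.2 ⟨hγ.continuousAt.tendsto, hγg⟩
    filter_upwards [hγ_fiber.eventually hmin, hγg] with t hft hgt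
    simp only [Function.comp_apply, L, hgt]
    linarith
  have := hLγ.fderiv_fderiv_apply_self_nonneg (hf.sub (contDiffAt_const.mul hg)) hcrit hγ
  rw [hD2L] at this
  simpa using this

end Calculus

section Coordinates

variable {n : ℕ}

theorem ContinuousLinearMap.apply_eq_sum_smul_single {M : Type*} [AddCommGroup M] [Module ℝ M]
    [TopologicalSpace M] (φ : (Fin n → ℝ) →L[ℝ] M) (v : Fin n → ℝ) :
    φ v = ∑ i, v i • φ (Pi.single i 1) := by
  conv_lhs => rw [← Finset.univ_sum_single v]
  rw [map_sum]
  refine Finset.sum_congr rfl fun i _ => ?_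
  rw [← map_smul, ← Pi.single_smul', smul_eq_mul, mul_one]

theorem fderiv_apply_eq_grad_dotProduct (f : (Fin n → ℝ) → ℝ) (x v : Fin n → ℝ) :
    fderiv ℝ f x v = grad f x ⬝ᵥ v := by
  rw [(fderiv ℝ f x).apply_eq_sum_smul_single, dotProduct_comm]
  rfl

theorem grad_eq_zero_of_fderiv_eq_zero {f : (Fin n → ℝ) → ℝ} {x : Fin n → ℝ}
    (h : fderiv ℝ f x = 0) : grad f x = 0 := by
  ext i
  simp [grad, h]

theorem hess_apply {f : (Fin n → ℝ) → ℝ} {x : Fin n → ℝ}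
    (hf : DifferentiableAt ℝ (fderiv ℝ f) x) (i j : Fin n) :
    hess f x i j = fderiv ℝ (fderiv ℝ f) x (Pi.single i 1) (Pi.single j 1) := by
  simp [hess, fderiv_clm_apply hf (differentiableAt_const _)]

theorem dotProduct_hess_mulVec {f : (Fin n → ℝ) → ℝ} {x : Fin n → ℝ}
    (hf : DifferentiableAt ℝ (fderiv ℝ f) x) (v : Fin n → ℝ) :
    v ⬝ᵥ (hess f x *ᵥ v) = fderiv ℝ (fderiv ℝ f) x v v := by
  set B := fderiv ℝ (fderiv ℝ f) x
  rw [B.apply_eq_sum_smul_single]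
  simp only [dotProduct, mulVec, hess_apply hf, FunLike.coe_sum, Finset.sum_apply,
    _root_.smul_apply, smul_eq_mul]
  refine Finset.sum_congr rfl fun i _ => ?_
  rw [(B (Pi.single i 1)).apply_eq_sum_smul_single]
  simp [B, Finset.mul_sum, mul_comm]

theorem euclNorm_smul (c : ℝ) (v : Fin n → ℝ) : euclNorm (c • v) = |c| * euclNorm v := by
  rw [euclNorm, euclNorm, smul_dotProduct, dotProduct_smul, smul_eq_mul, smul_eq_mul, ← mul_assoc,
    Real.sqrt_mul (mul_self_nonneg c), Real.sqrt_mul_self_eq_abs]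

theorem euclNorm_pos {v : Fin n → ℝ} (hv : v ≠ 0) : 0 < euclNorm v :=
  Real.sqrt_pos.2 (by simpa using dotProduct_self_star_pos_iff.2 hv)

end Coordinates

theorem dotProduct_swap_neg_self (w : Fin 2 → ℝ) : w ⬝ᵥ ![w 1, -(w 0)] = 0 := by
  simp [dotProduct, Fin.sum_univ_two, mul_comm]

theorem inv_euclNorm_smul_swap_neg_smul (c : ℝ) (w : Fin 2 → ℝ) :
    (euclNorm (c • w))⁻¹ • ![(c • w) 1, -((c • w) 0)]
      = (c / |c|) • ((euclNorm w)⁻¹ • ![w 1, -(w 0)]) := by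
  ext i
  fin_cases i <;> simp [euclNorm_smul] <;> ring

theorem smul_dotProduct_mulVec_smul {m : Type*} [Fintype m] (c : ℝ) (A : Matrix m m ℝ)
    (u : m → ℝ) : (c • u) ⬝ᵥ (A *ᵥ (c • u)) = c ^ 2 * (u ⬝ᵥ (A *ᵥ u)) := by
  rw [mulVec_smul, smul_dotProduct, dotProduct_smul, smul_smul, smul_eq_mul, sq]

/-- in the plane, at a constrained local minimum the algebraic
curvatures of the level curve of f and of the constraint curve satisfy
κ_f(x*) ≤ (λ*/|λ*|)·κ_g(x*). -/
theorem stmt_9 (f g : (Fin 2 → ℝ) → ℝ) (hf : ContDiff ℝ 2 f) (hg : ContDiff ℝ 2 g)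
    (xs : Fin 2 → ℝ) (hgxs : g xs = 0)
    (hmin : ∃ U ∈ nhds xs, ∀ y ∈ U, g y = 0 → f xs ≤ f y)
    (hf0 : grad f xs ≠ 0) (hg0 : grad g xs ≠ 0)
    (lam : ℝ) (hlam : grad f xs = lam • grad g xs)
    (uf ug : Fin 2 → ℝ)
    (huf : uf = (euclNorm (grad f xs))⁻¹ • ![grad f xs 1, -(grad f xs 0)])
    (hug : ug = (euclNorm (grad g xs))⁻¹ • ![grad g xs 1, -(grad g xs 0)])
    (kf kg : ℝ)
    (hkf : kf = -(uf ⬝ᵥ (hess f xs *ᵥ uf)) / euclNorm (grad f xs))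
    (hkg : kg = -(ug ⬝ᵥ (hess g xs *ᵥ ug)) / euclNorm (grad g xs)) :
    kf ≤ (lam / |lam|) * kg := by
  have hlam0 : lam ≠ 0 := by
    rintro rfl
    exact hf0 (by rw [hlam, zero_smul])
  have hN : 0 < euclNorm (grad g xs) := euclNorm_pos hg0
  have hNf : euclNorm (grad f xs) = |lam| * euclNorm (grad g xs) := by rw [hlam, euclNorm_smul]
  have hQf : uf ⬝ᵥ (hess f xs *ᵥ uf) = ug ⬝ᵥ (hess f xs *ᵥ ug) := by
    rw [huf, hug, hlam, inv_euclNorm_smul_swap_neg_smul, smul_dotProduct_mulVec_smul, div_pow,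
      sq_abs, div_self (pow_ne_zero 2 hlam0), one_mul]
  have hmin_fiber : IsLocalMinOn f {y | g y = g xs} xs := by
    obtain ⟨U, hU, hUmin⟩ := hmin
    exact eventually_inf_principal.2
      (mem_of_superset hU fun y hy hgy => hUmin y hy (hgy.trans hgxs))
  have hfg : fderiv ℝ f xs = lam • fderiv ℝ g xs := by
    ext v
    simp [fderiv_apply_eq_grad_dotProduct, hlam, smul_dotProduct]
  have hker : fderiv ℝ g xs ug = 0 := by
    rw [fderiv_apply_eq_grad_dotProduct, hug, dotProduct_smul, dotProduct_swap_neg_self, smul_zero]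
  have hlagrange := hmin_fiber.mul_fderiv_fderiv_le_of_fderiv_eq_smul hf.contDiffAt hg.contDiffAt
    (mt grad_eq_zero_of_fderiv_eq_zero hg0) hfg hker
  rw [← dotProduct_hess_mulVec (hf.contDiffAt.differentiableAt_fderiv),
    ← dotProduct_hess_mulVec (hg.contDiffAt.differentiableAt_fderiv)] at hlagrange
  rw [hkf, hkg, hQf, hNf]
  calc -(ug ⬝ᵥ (hess f xs *ᵥ ug)) / (|lam| * euclNorm (grad g xs))
      ≤ -(lam * (ug ⬝ᵥ (hess g xs *ᵥ ug))) / (|lam| * euclNorm (grad g xs)) := by gcongr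
    _ = lam / |lam| * (-(ug ⬝ᵥ (hess g xs *ᵥ ug)) / euclNorm (grad g xs)) := by field_simp
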